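/- Let $L$ be a real quadratic field with ring of integers $\mathcal{O}$, and let $\sigma_1, \sigma_2 : L \to \mathbb{R}$ be its two real embeddings. Then there exists a constant $c = c_L \geq 1$ such that for every pair $(x_1, x_2)$ of positive reals, there exists a unit $\mathsf{s} \in \mathcal{O}^{\times}$ with $c^{-1}(x_1 x_2)^{1/2} \leq |\sigma_i(\mathsf{s})| \cdot x_i \leq c (x_1 x_2)^{1/2}$ for $i = 1, 2$. -/

import Mathlib

open NumberField NumberField.InfinitePlace

private lemma balance_arith {t S r A x₁ x₂ : ℝ} (htgt : 1 < t) (hSpos : 0 < S)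
    (hx₁ : 0 < x₁) (hApos : 0 < A) (hAr : A ≤ r) (hrA : r < A * t)
    (hSx : S = r * x₁) (hx2 : x₂ = S * r) :
    (t⁻¹ * S ≤ A * x₁ ∧ A * x₁ ≤ t * S) ∧ (t⁻¹ * S ≤ A⁻¹ * x₂ ∧ A⁻¹ * x₂ ≤ t * S) := by
  have htpos : 0 < t := lt_trans one_pos htgt
  have hti : t * t⁻¹ = 1 := mul_inv_cancel₀ htpos.ne'
  have hAi : A * A⁻¹ = 1 := mul_inv_cancel₀ hApos.ne'
  have hAipos : 0 < A⁻¹ := by positivity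
  have hinv1 : t⁻¹ ≤ 1 := by nlinarith
  refine ⟨⟨?_, ?_⟩, ?_, ?_⟩
  · nlinarith [mul_le_mul_of_nonneg_left
      (mul_lt_mul_of_pos_right hrA hx₁).le (inv_nonneg.mpr htpos.le),
      mul_pos hApos hx₁]
  · nlinarith [mul_le_mul_of_nonneg_right hAr hx₁.le]
  · nlinarith [mul_le_mul_of_nonneg_left hAr (mul_pos hAipos hSpos).le]
  · have h := mul_lt_mul_of_pos_left hrA (mul_pos hAipos hSpos)
    have he : A⁻¹ * S * (A * t) = t * S := by
      field_simp
    rw [hx2, ← mul_assoc]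
    linarith [h, he]

/-- Balancing by units in a real quadratic field: there is `c = c_L ≥ 1` so that for all
positive reals `x₁, x₂` there is a unit `s ∈ 𝒪ˣ` with
`c⁻¹ (x₁x₂)^{1/2} ≤ |σᵢ(s)| xᵢ ≤ c (x₁x₂)^{1/2}` for `i = 1, 2`. -/
theorem stmt_10 (L : Type*) [Field L] [NumberField L]
    (hdeg : Module.finrank ℚ L = 2)
    (σ₁ σ₂ : L →+* ℝ) (hσ : σ₁ ≠ σ₂) :
    ∃ c : ℝ, 1 ≤ c ∧ ∀ x₁ x₂ : ℝ, 0 < x₁ → 0 < x₂ →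
      ∃ s : (NumberField.RingOfIntegers L)ˣ,
        (c⁻¹ * Real.sqrt (x₁ * x₂) ≤
            |σ₁ (algebraMap (NumberField.RingOfIntegers L) L (s : NumberField.RingOfIntegers L))| * x₁ ∧
          |σ₁ (algebraMap (NumberField.RingOfIntegers L) L (s : NumberField.RingOfIntegers L))| * x₁ ≤
            c * Real.sqrt (x₁ * x₂)) ∧
        (c⁻¹ * Real.sqrt (x₁ * x₂) ≤
            |σ₂ (algebraMap (NumberField.RingOfIntegers L) L (s : NumberField.RingOfIntegers L))| * x₂ ∧
          |σ₂ (algebraMap (NumberField.RingOfIntegers L) L (s : NumberField.RingOfIntegers L))| * x₂ ≤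
            c * Real.sqrt (x₁ * x₂)) := by
  classical
  set φ₁ : L →+* ℂ := Complex.ofRealHom.comp σ₁ with hφ₁
  set φ₂ : L →+* ℂ := Complex.ofRealHom.comp σ₂ with hφ₂
  have hval : ∀ (σ : L →+* ℝ) (x : L), (Complex.ofRealHom.comp σ) x = (σ x : ℂ) := fun _ _ => rfl
  have hreal : ∀ σ : L →+* ℝ, ComplexEmbedding.IsReal (Complex.ofRealHom.comp σ) := by
    intro σ
    rw [ComplexEmbedding.isReal_iff]
    ext x
    simp [ComplexEmbedding.conjugate_coe_eq, hval]
  have habs : ∀ (σ : L →+* ℝ) (x : L), (mk (Complex.ofRealHom.comp σ)) x = |σ x| := by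
    intro σ x
    rw [InfinitePlace.apply, hval]
    simp
  have hφne : φ₁ ≠ φ₂ := by
    intro h
    apply hσ
    ext x
    have := congrArg (fun f => f x) h
    simp only [hφ₁, hφ₂, hval] at this
    exact_mod_cast this
  have hwne : (mk φ₁ : InfinitePlace L) ≠ mk φ₂ := by
    rw [Ne, mk_eq_iff]
    push_neg
    refine ⟨hφne, ?_⟩
    rw [(ComplexEmbedding.isReal_iff).mp (hreal σ₁)]
    exact hφne
  have hcard : Fintype.card (L →+* ℂ) = 2 := by
    rw [NumberField.Embeddings.card L ℂ, hdeg]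
  have hemb : (Finset.univ : Finset (L →+* ℂ)) = {φ₁, φ₂} := by
    symm
    apply Finset.eq_univ_of_card
    rw [Finset.card_insert_of_notMem (by simpa using hφne), Finset.card_singleton, hcard]
  have hplaces : (Finset.univ : Finset (InfinitePlace L)) = {mk φ₁, mk φ₂} := by
    symm
    rw [Finset.eq_univ_iff_forall]
    intro w
    have h2 : w.embedding ∈ (Finset.univ : Finset (L →+* ℂ)) := Finset.mem_univ _
    rw [hemb, Finset.mem_insert, Finset.mem_singleton] at h2
    rw [Finset.mem_insert, Finset.mem_singleton, ← mk_embedding w]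
    rcases h2 with h | h <;> rw [h] <;> tauto
  have hmult : ∀ φ : L →+* ℂ, ComplexEmbedding.IsReal φ → mult (mk φ) = 1 := by
    intro φ h
    simp [mult, isReal_mk_iff.mpr h]
  -- product of the two absolute values on units is 1
  have key : ∀ u : (𝓞 L)ˣ,
      |σ₁ (algebraMap (𝓞 L) L u)| * |σ₂ (algebraMap (𝓞 L) L u)| = 1 := by
    intro u
    have hp := prod_eq_abs_norm (K := L) (algebraMap (𝓞 L) L u)
    rw [hplaces, Finset.prod_insert (by simpa using hwne), Finset.prod_singleton,
      hmult φ₁ (hreal σ₁), hmult φ₂ (hreal σ₂), pow_one, pow_one] at hp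
    have hnorm := NumberField.isUnit_iff_norm.mp u.isUnit
    rw [RingOfIntegers.coe_norm] at hnorm
    rw [← habs σ₁, ← habs σ₂, hp]
    exact_mod_cast hnorm
  -- find a unit with |σ₁ u| > 1
  obtain ⟨u, hu⟩ := NumberField.Units.dirichletUnitTheorem.exists_unit (K := L) (mk φ₁)
  have hu2 : (mk φ₂) (algebraMap (𝓞 L) L u) < 1 := by
    have := hu (mk φ₂) hwne.symm
    have hpos : 0 < (mk φ₂) (algebraMap (𝓞 L) L u) := by
      rw [InfinitePlace.pos_iff]
      simp only [ne_eq, map_eq_zero]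
      exact RingOfIntegers.coe_ne_zero_iff.mpr u.ne_zero
    nlinarith [Real.exp_log hpos, Real.exp_lt_one_iff.mpr this, Real.exp_log hpos]
  set t : ℝ := |σ₁ (algebraMap (𝓞 L) L u)| with ht
  have htpos : 0 < t := by
    rw [ht, abs_pos]
    simp only [ne_eq, map_eq_zero]
    exact RingOfIntegers.coe_ne_zero_iff.mpr u.ne_zero
  have ht2 : |σ₂ (algebraMap (𝓞 L) L u)| = t⁻¹ := by
    field_simp [ht]
    rw [mul_comm]
    exact key u
  have htgt : 1 < t := by
    have h2 : |σ₂ (algebraMap (𝓞 L) L u)| < 1 := by rw [← habs σ₂]; exact hu2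
    rw [ht2] at h2
    nlinarith [inv_mul_cancel₀ (ne_of_gt htpos), mul_le_mul_of_nonneg_right h2.le htpos.le]
  -- powers of the unit
  set g : (𝓞 L)ˣ →* ℝˣ := Units.map ((σ₁.comp (algebraMap (𝓞 L) L)).toMonoidHom) with hg
  set g' : (𝓞 L)ˣ →* ℝˣ := Units.map ((σ₂.comp (algebraMap (𝓞 L) L)).toMonoidHom) with hg'
  have hpow₁ : ∀ n : ℤ, σ₁ (algebraMap (𝓞 L) L ((u ^ n : (𝓞 L)ˣ) : 𝓞 L))
      = (σ₁ (algebraMap (𝓞 L) L u)) ^ n := by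
    intro n
    have : σ₁ (algebraMap (𝓞 L) L ((u ^ n : (𝓞 L)ˣ) : 𝓞 L)) = ((g (u ^ n) : ℝˣ) : ℝ) := rfl
    rw [this, map_zpow, Units.val_zpow_eq_zpow_val]
    rfl
  have hpow₂ : ∀ n : ℤ, σ₂ (algebraMap (𝓞 L) L ((u ^ n : (𝓞 L)ˣ) : 𝓞 L))
      = (σ₂ (algebraMap (𝓞 L) L u)) ^ n := by
    intro n
    have : σ₂ (algebraMap (𝓞 L) L ((u ^ n : (𝓞 L)ˣ) : 𝓞 L)) = ((g' (u ^ n) : ℝˣ) : ℝ) := rfl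
    rw [this, map_zpow, Units.val_zpow_eq_zpow_val]
    rfl
  refine ⟨t, htgt.le, fun x₁ x₂ hx₁ hx₂ => ?_⟩
  set S : ℝ := Real.sqrt (x₁ * x₂) with hS
  have hSpos : 0 < S := Real.sqrt_pos.mpr (by positivity)
  set r : ℝ := S / x₁ with hr
  have hrpos : 0 < r := by positivity
  set n : ℤ := ⌊Real.logb t r⌋ with hn
  refine ⟨u ^ n, ?_⟩
  set A : ℝ := t ^ n with hA
  have hApos : 0 < A := zpow_pos htpos n
  have habs₁ : |σ₁ (algebraMap (𝓞 L) L ((u ^ n : (𝓞 L)ˣ) : 𝓞 L))| = A := by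
    rw [hpow₁, show |σ₁ ((algebraMap (𝓞 L) L) ↑u) ^ n| = |σ₁ ((algebraMap (𝓞 L) L) ↑u)| ^ n
      from map_zpow₀ (absHom (α := ℝ)) _ _, ← ht]
  have habs₂ : |σ₂ (algebraMap (𝓞 L) L ((u ^ n : (𝓞 L)ˣ) : 𝓞 L))| = A⁻¹ := by
    have hk := key (u ^ n)
    rw [habs₁] at hk
    field_simp at hk ⊢
    linarith [hk]
  -- floor bounds
  have hAr : A ≤ r := by
    have h1 : (n : ℝ) ≤ Real.logb t r := Int.floor_le _
    have := Real.rpow_le_rpow_of_exponent_le htgt.le h1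
    rwa [Real.rpow_logb htpos htgt.ne' hrpos, Real.rpow_intCast] at this
  have hrA : r < A * t := by
    have h1 : Real.logb t r < (n : ℝ) + 1 := Int.lt_floor_add_one _
    have := Real.rpow_lt_rpow_of_exponent_lt htgt h1
    rwa [Real.rpow_logb htpos htgt.ne' hrpos, Real.rpow_add htpos, Real.rpow_intCast,
      Real.rpow_one] at this
  have hSx : S = r * x₁ := by
    rw [hr]; field_simp
  have hx2 : x₂ = S * r := by
    have : S ^ 2 = x₁ * x₂ := Real.sq_sqrt (by positivity)
    rw [hr]; field_simp; nlinarith [this]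
  rw [habs₁, habs₂]
  exact balance_arith htgt hSpos hx₁ hApos hAr hrA hSx hx2
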